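/- arXiv:2106.09183 — 4 statements merged into one kernel-verified Lean document; each statement's English description precedes it below -/
import Mathlib

section
/- Let d, d_j, n, b, k_1, k_2, K, r > 0 and let τ* ≥ 0. Suppose n·b·e^{-d_j·τ*}·K/(1+k_1·K) > d. Then the system r(1 - x*/K) = b·y*/(1+k_1·x*+k_2·y*) and n·b·x*·e^{-d_j·τ*}/(1+k_1·x*+k_2·y*) = d has a solution with 0 < x* < K and y* > 0. -/
open Set

lemma exists_mem_Ioo_logistic_eq_affine {r c A d K : ℝ} (hr : 0 < r) (hc : 0 < c) (hA : 0 < A)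
    (hd : 0 < d) (hdK : d < A * K) :
    ∃ x ∈ Ioo (d / A) K, r * x * (1 - x / K) = c * (A * x - d) := by
  have hx₀K : d / A < K := (div_lt_iff₀ hA).mpr (by linarith)
  have hx₀ : 0 < d / A := div_pos hd hA
  have hK : 0 < K := hx₀.trans hx₀K
  set f : ℝ → ℝ := fun x ↦ r * x * (1 - x / K) - c * (A * x - d)
  have hf_left : 0 < f (d / A) := by
    have hAx₀ : A * (d / A) = d := by field_simp
    have : d / A / K < 1 := (div_lt_one hK).mpr hx₀K
    simp only [f, hAx₀, sub_self, mul_zero, sub_zero]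
    exact mul_pos (mul_pos hr hx₀) (by linarith)
  have hf_right : f K < 0 := by
    simp only [f, div_self hK.ne', sub_self, mul_zero, zero_sub, neg_lt_zero]
    exact mul_pos hc (by linarith)
  obtain ⟨x, hx, hfx⟩ := intermediate_value_Ioo' hx₀K.le (by fun_prop : Continuous f).continuousOn
    ⟨hf_right, hf_left⟩
  exact ⟨x, hx, sub_eq_zero.mp hfx⟩

theorem exists_beddingtonDeAngelis_equilibrium {E d b k₁ k₂ K r : ℝ} (hd : 0 < d) (hb : 0 < b)
    (hk₂ : 0 < k₂) (hK : 0 < K) (hr : 0 < r) (hk₁K : 0 < 1 + k₁ * K)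
    (hperm : d < E * K / (1 + k₁ * K)) :
    ∃ x y : ℝ, 0 < x ∧ x < K ∧ 0 < y ∧
      r * (1 - x / K) = b * y / (1 + k₁ * x + k₂ * y) ∧
      E * x / (1 + k₁ * x + k₂ * y) = d := by
  rw [lt_div_iff₀ hk₁K] at hperm
  have hE : 0 < E := pos_of_mul_pos_left (by nlinarith) hK.le
  set A := E - d * k₁
  have hAK : d < A * K := by simp only [A]; nlinarith
  have hA : 0 < A := pos_of_mul_pos_left (hd.trans hAK) hK.le
  -- The predator nullcline `E x = d D` gives `k₂ y = (A x - d) / d`; substituting it into the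
  -- prey nullcline leaves `r x (1 - x/K) = b / (E k₂) * (A x - d)`.
  obtain ⟨x, ⟨hx₀x, hxK⟩, hx⟩ :=
    exists_mem_Ioo_logistic_eq_affine hr (div_pos hb (mul_pos hE hk₂)) hA hd hAK
  have hAx : d < A * x := (div_lt_iff₀' hA).mp hx₀x
  have hx_pos : 0 < x := (div_pos hd hA).trans hx₀x
  set y := (A * x - d) / (d * k₂)
  have hD : 1 + k₁ * x + k₂ * y = E * x / d := by
    simp only [y, A]; field_simp; ring
  refine ⟨x, y, hx_pos, hxK, div_pos (by linarith) (by positivity), ?_, ?_⟩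
  · rw [hD, div_div_eq_mul_div]
    simp only [y]
    field_simp at hx ⊢
    linear_combination hx
  · rw [hD]
    field_simp

theorem stmt_0_general (d dj n b k1 k2 K r τs : ℝ)
    (hd : 0 < d) (hb : 0 < b)
    (hk1 : 0 < k1) (hk2 : 0 < k2) (hK : 0 < K) (hr : 0 < r)
    (hperm : n * b * Real.exp (-dj * τs) * K / (1 + k1 * K) > d) :
    ∃ x y : ℝ, 0 < x ∧ x < K ∧ 0 < y ∧
      r * (1 - x / K) = b * y / (1 + k1 * x + k2 * y) ∧
      n * b * x * Real.exp (-dj * τs) / (1 + k1 * x + k2 * y) = d := by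
  obtain ⟨x, y, hx, hxK, hy, hprey, hpred⟩ :=
    exists_beddingtonDeAngelis_equilibrium hd hb hk2 hK hr (by positivity) hperm
  exact ⟨x, y, hx, hxK, hy, hprey, by rw [← hpred]; ring⟩

theorem stmt_0 (d dj n b k1 k2 K r τs : ℝ)
    (hd : 0 < d) (hdj : 0 < dj) (hn : 0 < n) (hb : 0 < b)
    (hk1 : 0 < k1) (hk2 : 0 < k2) (hK : 0 < K) (hr : 0 < r)
    (hτ : 0 ≤ τs)
    (hperm : n * b * Real.exp (-dj * τs) * K / (1 + k1 * K) > d) :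
    ∃ x y : ℝ, 0 < x ∧ x < K ∧ 0 < y ∧
      r * (1 - x / K) = b * y / (1 + k1 * x + k2 * y) ∧
      n * b * x * Real.exp (-dj * τs) / (1 + k1 * x + k2 * y) = d :=
  stmt_0_general d dj n b k1 k2 K r τs hd hb hk1 hk2 hK hr hperm
end

section
/- Let d > 0 and τ₀ ≥ 0, and consider G(λ) = λ + d - d·e^{-λτ₀} on ℂ. Then λ = 0 is a simple root of G, and every root λ = u + iv of G satisfies u ≤ 0. -/
open Complex

theorem hasDerivAt_add_sub_mul_exp_neg_mul (d τ z : ℂ) :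
    HasDerivAt (fun w : ℂ => w + d - d * exp (-w * τ)) (1 + d * τ * exp (-z * τ)) z := by
  have hexp : HasDerivAt (fun w : ℂ => exp (-w * τ)) (exp (-z * τ) * (-1 * τ)) z :=
    ((hasDerivAt_id' z).neg.mul_const τ).cexp
  exact (((hasDerivAt_id' z).add_const d).sub (hexp.const_mul d)).congr_deriv (by ring)

/-- For `Re z > 0`: `‖z + d‖ ≥ Re z + d > d ≥ d e^{-τ Re z} = ‖d e^{-zτ}‖`. -/
theorem re_nonpos_of_add_eq_mul_exp_neg_mul {d τ : ℝ} (hd : 0 ≤ d) (hτ : 0 ≤ τ) {z : ℂ}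
    (hz : z + d = d * exp (-z * τ)) : z.re ≤ 0 := by
  by_contra! hpos
  have hnorm : ‖z + d‖ = d * Real.exp (-z.re * τ) := by
    rw [hz, norm_mul, norm_exp, norm_real, Real.norm_of_nonneg hd]
    simp
  have hexp_le : Real.exp (-z.re * τ) ≤ 1 := Real.exp_le_one_iff.mpr (by nlinarith)
  have hre_le : (z + d).re ≤ ‖z + d‖ := re_le_norm _
  rw [add_re, ofReal_re, hnorm] at hre_le
  linarith [mul_le_of_le_one_right hd hexp_le]

theorem stmt_3 (d τ₀ : ℝ) (hd : 0 < d) (hτ : 0 ≤ τ₀) :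
    (fun lam : ℂ => lam + d - d * Complex.exp (-lam * τ₀)) 0 = 0 ∧
    deriv (fun lam : ℂ => lam + d - d * Complex.exp (-lam * τ₀)) 0 ≠ 0 ∧
    ∀ lam : ℂ, lam + d - d * Complex.exp (-lam * τ₀) = 0 → lam.re ≤ 0 := by
  refine ⟨by simp, ?_, fun lam hlam ↦ ?_⟩
  · rw [(hasDerivAt_add_sub_mul_exp_neg_mul d τ₀ 0).deriv, neg_zero, zero_mul, exp_zero, mul_one]
    exact_mod_cast (by positivity : (1 + d * τ₀ : ℝ) ≠ 0)
  · exact re_nonpos_of_add_eq_mul_exp_neg_mul hd.le hτ (by linear_combination hlam)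
end

section
/- Let H₁, H₂, N₁, N₂ ∈ ℝ and τ* ≥ 0 with H₂ + N₂ > 0, H₁² - 2H₂ - N₁² > 0, and H₂² - N₂² > 0. Then the equation λ² + H₁λ + H₂ + (N₁λ + N₂)e^{-λτ*} = 0 has no root λ with Re(λ) = 0. -/
/-!
On the imaginary axis `λ = i v` the delay factor `e^{-λτ}` has modulus one, so a root forces
`|(iv)² + H₁ iv + H₂| = |N₁ iv + N₂|`. Squaring both moduli turns this into
`v⁴ + (H₁² - 2H₂ - N₁²) v² + (H₂² - N₂²) = 0`, a quadratic in `v²` with positive coefficients,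
which has no real solution.
-/

open Complex

lemma Complex.norm_exp_neg_mul_ofReal {z : ℂ} (hz : z.re = 0) (τ : ℝ) :
    ‖exp (-z * τ)‖ = 1 := by
  simp [norm_exp, mul_re, hz]

lemma norm_eq_norm_of_add_mul_eq_zero {𝕜 : Type*} [NormedDivisionRing 𝕜] {a b u : 𝕜} (hu : ‖u‖ = 1) (h : a + b * u = 0) :
    ‖a‖ = ‖b‖ := by
  rw [eq_neg_of_add_eq_zero_left h, norm_neg, norm_mul, hu, mul_one]

lemma normSq_quadratic_sub_normSq_linear_I_mul (H₁ H₂ N₁ N₂ v : ℝ) :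
    normSq ((v * I) ^ 2 + H₁ * (v * I) + H₂) - normSq (N₁ * (v * I) + N₂) =
      v ^ 4 + (H₁ ^ 2 - 2 * H₂ - N₁ ^ 2) * v ^ 2 + (H₂ ^ 2 - N₂ ^ 2) := by
  simp only [normSq_apply, sq, add_re, add_im, mul_re, mul_im, ofReal_re, ofReal_im, I_re, I_im]
  ring

theorem stmt_11_general (H₁ H₂ N₁ N₂ τs : ℝ)
    (h2 : 0 < H₁ ^ 2 - 2 * H₂ - N₁ ^ 2)
    (h3 : 0 < H₂ ^ 2 - N₂ ^ 2) :
    ∀ lam : ℂ,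
      lam ^ 2 + H₁ * lam + H₂ + (N₁ * lam + N₂) * Complex.exp (-lam * τs) = 0 →
      lam.re ≠ 0 := by
  intro lam hroot hre
  have hlam : lam = lam.im * I := by
    apply Complex.ext <;> simp [hre]
  have hnorm := norm_eq_norm_of_add_mul_eq_zero (norm_exp_neg_mul_ofReal hre τs) hroot
  have hnormSq : normSq (lam ^ 2 + H₁ * lam + H₂) = normSq (N₁ * lam + N₂) := by
    rw [← Complex.sq_norm, ← Complex.sq_norm, hnorm]
  have hquartic := normSq_quadratic_sub_normSq_linear_I_mul H₁ H₂ N₁ N₂ lam.im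
  rw [← hlam, hnormSq, sub_self] at hquartic
  have hpos : 0 < lam.im ^ 4 + (H₁ ^ 2 - 2 * H₂ - N₁ ^ 2) * lam.im ^ 2 + (H₂ ^ 2 - N₂ ^ 2) := by
    positivity
  exact hpos.ne hquartic

theorem stmt_11 (H₁ H₂ N₁ N₂ τs : ℝ) (hτ : 0 ≤ τs)
    (h1 : 0 < H₂ + N₂) (h2 : 0 < H₁ ^ 2 - 2 * H₂ - N₁ ^ 2)
    (h3 : 0 < H₂ ^ 2 - N₂ ^ 2) :
    ∀ lam : ℂ,
      lam ^ 2 + H₁ * lam + H₂ + (N₁ * lam + N₂) * Complex.exp (-lam * τs) = 0 →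
      lam.re ≠ 0 :=
  stmt_11_general H₁ H₂ N₁ N₂ τs h2 h3
end

section
/- Let a₁, a₂, a₃, d_j > 0 and let τ : [0,∞) → [τ_m, τ_M] be continuous and nondecreasing with 0 ≤ τ_m ≤ τ_M < ∞. If a₁·e^{-d_j·τ_M} > a₃, then there exists a unique ṽ > 0 satisfying ṽ = (a₁·e^{-d_j·τ(ṽ)} - a₃)/(a₂·a₃). -/
theorem stmt_14 (a₁ a₂ a₃ dj τm τM : ℝ)
    (ha₁ : 0 < a₁) (ha₂ : 0 < a₂) (ha₃ : 0 < a₃) (hdj : 0 < dj)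
    (hτm : 0 ≤ τm) (hτ : τm ≤ τM)
    (τ : ℝ → ℝ) (hτc : ContinuousOn τ (Set.Ici 0))
    (hτmono : MonotoneOn τ (Set.Ici 0))
    (hτrange : ∀ v, 0 ≤ v → τ v ∈ Set.Icc τm τM)
    (hcond : a₁ * Real.exp (-dj * τM) > a₃) :
    ∃! v : ℝ, 0 < v ∧ v = (a₁ * Real.exp (-dj * τ v) - a₃) / (a₂ * a₃) := by
  have hden : 0 < a₂ * a₃ := mul_pos ha₂ ha₃
  set g : ℝ → ℝ := fun v => (a₁ * Real.exp (-dj * τ v) - a₃) / (a₂ * a₃) with hg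
  -- g is antitone on [0,∞)
  have hanti : ∀ v w, 0 ≤ v → v ≤ w → g w ≤ g v := by
    intro v w hv hvw
    have hτle : τ v ≤ τ w := hτmono hv (le_trans hv hvw) hvw
    have : Real.exp (-dj * τ w) ≤ Real.exp (-dj * τ v) := by
      apply Real.exp_le_exp.mpr
      nlinarith
    simp only [hg]
    gcongr
  -- g is positive on [0,∞)
  have hgpos : ∀ v, 0 ≤ v → 0 < g v := by
    intro v hv
    have h1 : τ v ≤ τM := (hτrange v hv).2
    have h2 : Real.exp (-dj * τM) ≤ Real.exp (-dj * τ v) := by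
      apply Real.exp_le_exp.mpr; nlinarith
    have : a₃ < a₁ * Real.exp (-dj * τ v) := by nlinarith
    exact div_pos (by linarith) hden
  -- upper bound
  set M₀ : ℝ := (a₁ - a₃) / (a₂ * a₃) with hM₀
  have hexp_le_one : ∀ v, 0 ≤ v → Real.exp (-dj * τ v) ≤ 1 := by
    intro v hv
    have h1 : τm ≤ τ v := (hτrange v hv).1
    have : -dj * τ v ≤ 0 := by nlinarith
    simpa using Real.exp_le_exp.mpr (le_trans this le_rfl) |>.trans_eq Real.exp_zero
  have hub : ∀ v, 0 ≤ v → g v ≤ M₀ := by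
    intro v hv
    simp only [hg, hM₀]
    gcongr
    nlinarith [hexp_le_one v hv]
  have hM₀pos : 0 < M₀ := lt_of_lt_of_le (hgpos 0 le_rfl) (hub 0 le_rfl)
  -- continuity of f = id - g on [0, M₀]
  set f : ℝ → ℝ := fun v => v - g v with hf
  have hfc : ContinuousOn f (Set.Icc 0 M₀) := by
    apply ContinuousOn.sub continuousOn_id
    apply ContinuousOn.div_const
    apply ContinuousOn.sub _ continuousOn_const
    apply ContinuousOn.mul continuousOn_const
    exact Real.continuous_exp.comp_continuousOn
      (ContinuousOn.mul continuousOn_const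
        (hτc.mono (fun x hx => hx.1)))
  have hf0 : f 0 ≤ 0 := by
    have := hgpos 0 le_rfl
    simp only [hf]; linarith
  have hfM : 0 ≤ f M₀ := by
    have := hub M₀ hM₀pos.le
    simp only [hf]; linarith
  have hmem : (0:ℝ) ∈ Set.Icc (f 0) (f M₀) := ⟨hf0, hfM⟩
  obtain ⟨v, hvmem, hveq⟩ := intermediate_value_Icc hM₀pos.le hfc hmem
  have hvfix : v = g v := by
    have : v - g v = 0 := hveq
    linarith
  have hvpos : 0 < v := hvfix ▸ hgpos v hvmem.1
  refine ⟨v, ⟨hvpos, hvfix⟩, ?_⟩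
  rintro w ⟨hwpos, hwfix⟩
  rcases le_total w v with hle | hle
  · have h1 : g v ≤ g w := hanti w v hwpos.le hle
    have h2 : v ≤ w := by rw [hvfix, hwfix]; exact h1
    linarith
  · have h1 : g w ≤ g v := hanti v w hvpos.le hle
    have h2 : w ≤ v := by rw [hvfix, hwfix]; exact h1
    linarith
end
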